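/- arXiv:quant-ph/9601020 — 2 statements merged into one kernel-verified Lean document; each statement's English description precedes it below -/
import Mathlib

section
/- Let ρ0, ρ1 be density matrices on ℂ^D and let {E_b}_{b=1}^n be a POVM. Then Σ_{b=1}^n √(Re tr(ρ0 E_b)) · √(Re tr(ρ1 E_b)) ≥ |tr(ρ0^{1/2} ρ1^{1/2})|. -/
/-!
Inserting `∑ b, E b = 1` splits `tr(ρ0^{1/2} ρ1^{1/2})` into `∑ b, tr(ρ0^{1/2} E_b ρ1^{1/2})`.
For positive semidefinite `E`, `(X, Y) ↦ tr(Y E Xᴴ)` is a semi-inner product on matrices, so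
Cauchy–Schwarz bounds the `b`-th term by `√tr(ρ0^{1/2} E_b ρ0^{1/2}) √tr(ρ1^{1/2} E_b ρ1^{1/2})`,
which is `√tr(ρ0 E_b) √tr(ρ1 E_b)` by cyclicity of the trace.
-/

open Matrix
open scoped ComplexOrder

/-- The positive semidefinite square root, as `Matrix.PosSemidef.sqrt` was defined in Mathlib
(Dec 2024); the declaration was removed from Mathlib since. -/
noncomputable def Matrix.PosSemidef.sqrt {n : Type*} [Fintype n] [DecidableEq n]
    {A : Matrix n n ℂ} (hA : A.PosSemidef) : Matrix n n ℂ :=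
  (hA.1.eigenvectorUnitary : Matrix n n ℂ) *
    diagonal (fun i => ((Real.sqrt (hA.1.eigenvalues i) : ℝ) : ℂ)) *
    (star hA.1.eigenvectorUnitary : Matrix n n ℂ)

open scoped MatrixOrder

namespace Matrix

theorem PosSemidef.sqrt_eq_cfcSqrt {n : Type*} [Fintype n] [DecidableEq n]
    {A : Matrix n n ℂ} (hA : A.PosSemidef) : hA.sqrt = CFC.sqrt A := by
  rw [CFC.sqrt_eq_real_sqrt A hA.nonneg, cfcₙ_eq_cfc, hA.1.cfc_eq]
  rfl

variable {n 𝕜 : Type*} [Fintype n] [RCLike 𝕜]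

theorem norm_trace_mul_mul_conjTranspose_le {E : Matrix n n 𝕜} (hE : E.PosSemidef)
    (A B : Matrix n n 𝕜) :
    ‖(A * E * Bᴴ).trace‖ ≤
      √(RCLike.re (A * E * Aᴴ).trace) * √(RCLike.re (B * E * Bᴴ).trace) := by
  let := E.toMatrixSeminormedAddCommGroup hE
  let := E.toMatrixInnerProductSpace hE
  have := norm_inner_le_norm (𝕜 := 𝕜) B A
  rwa [norm_eq_sqrt_re_inner (𝕜 := 𝕜) A, norm_eq_sqrt_re_inner (𝕜 := 𝕜) B, mul_comm] at this

theorem trace_cfcSqrt_mul_mul_cfcSqrt [DecidableEq n] {A : Matrix n n 𝕜} (hA : A.PosSemidef)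
    (E : Matrix n n 𝕜) : (CFC.sqrt A * E * CFC.sqrt A).trace = (A * E).trace := by
  rw [mul_assoc, trace_mul_comm, mul_assoc, CFC.sqrt_mul_sqrt_self A hA.nonneg, trace_mul_comm]

theorem norm_trace_cfcSqrt_mul_mul_cfcSqrt_le [DecidableEq n] {A B E : Matrix n n 𝕜}
    (hA : A.PosSemidef) (hB : B.PosSemidef) (hE : E.PosSemidef) :
    ‖(CFC.sqrt A * E * CFC.sqrt B).trace‖ ≤
      √(RCLike.re (A * E).trace) * √(RCLike.re (B * E).trace) := by
  have hsa : ∀ C : Matrix n n 𝕜, (CFC.sqrt C)ᴴ = CFC.sqrt C := fun C =>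
    (CFC.sqrt_nonneg C).isSelfAdjoint
  simpa only [hsa, trace_cfcSqrt_mul_mul_cfcSqrt hA, trace_cfcSqrt_mul_mul_cfcSqrt hB] using
    norm_trace_mul_mul_conjTranspose_le hE (CFC.sqrt A) (CFC.sqrt B)

end Matrix

theorem statistical_overlap_ge_abs_trace_sqrt_mul_sqrt_general {D n : ℕ}
    (ρ0 ρ1 : Matrix (Fin D) (Fin D) ℂ)
    (hρ0 : ρ0.PosSemidef) (hρ1 : ρ1.PosSemidef)
    (E : Fin n → Matrix (Fin D) (Fin D) ℂ)
    (hE : ∀ b, (E b).PosSemidef) (hEsum : ∑ b, E b = 1) :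
    ‖(hρ0.sqrt * hρ1.sqrt).trace‖
      ≤ ∑ b, Real.sqrt (((ρ0 * E b).trace).re) * Real.sqrt (((ρ1 * E b).trace).re) := by
  have hsplit : CFC.sqrt ρ0 * CFC.sqrt ρ1 = ∑ b, CFC.sqrt ρ0 * E b * CFC.sqrt ρ1 := by
    rw [← Finset.sum_mul, ← Finset.mul_sum, hEsum, mul_one]
  calc ‖(hρ0.sqrt * hρ1.sqrt).trace‖
      = ‖∑ b, (CFC.sqrt ρ0 * E b * CFC.sqrt ρ1).trace‖ := by
        rw [hρ0.sqrt_eq_cfcSqrt, hρ1.sqrt_eq_cfcSqrt, hsplit, trace_sum]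
    _ ≤ ∑ b, ‖(CFC.sqrt ρ0 * E b * CFC.sqrt ρ1).trace‖ := norm_sum_le _ _
    _ ≤ _ := Finset.sum_le_sum fun b _ =>
        norm_trace_cfcSqrt_mul_mul_cfcSqrt_le hρ0 hρ1 (hE b)

/-- The statistical overlap of the outcome distributions of any POVM measurement on
two density matrices is bounded below by `|tr(ρ0^{1/2} ρ1^{1/2})|`. -/
theorem statistical_overlap_ge_abs_trace_sqrt_mul_sqrt {D n : ℕ}
    (ρ0 ρ1 : Matrix (Fin D) (Fin D) ℂ)
    (hρ0 : ρ0.PosSemidef) (hρ1 : ρ1.PosSemidef)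
    (hρ0t : ρ0.trace = 1) (hρ1t : ρ1.trace = 1)
    (E : Fin n → Matrix (Fin D) (Fin D) ℂ)
    (hE : ∀ b, (E b).PosSemidef) (hEsum : ∑ b, E b = 1) :
    ‖(hρ0.sqrt * hρ1.sqrt).trace‖
      ≤ ∑ b, Real.sqrt (((ρ0 * E b).trace).re) * Real.sqrt (((ρ1 * E b).trace).re) :=
  statistical_overlap_ge_abs_trace_sqrt_mul_sqrt_general ρ0 ρ1 hρ0 hρ1 E hE hEsum
end

section
/- (Uhlmann's theorem.) Let ρ0, ρ1 be density matrices on ℂ^D. For a unit vector ψ in ℂ^D ⊗ ℂ^D (equivalently, a vector indexed by pairs (i,k)), say ψ is a purification of a density matrix ρ if its partial trace over the second factor equals ρ, i.e., ρ_{ij} = Σ_k ψ_{(i,k)} · conj(ψ_{(j,k)}). Then: (i) for all purifications ψ0 of ρ0 and ψ1 of ρ1, |⟨ψ0, ψ1⟩| ≤ tr √(ρ1^{1/2} ρ0 ρ1^{1/2}); and (ii) there exist purifications ψ0 of ρ0 and ψ1 of ρ1 with |⟨ψ0, ψ1⟩| = tr √(ρ1^{1/2} ρ0 ρ1^{1/2}).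 -/
open Matrix
open scoped ComplexOrder
open scoped MatrixOrder

/-- The sandwiched matrix `ρ1^{1/2} ρ0 ρ1^{1/2}` is positive semidefinite. -/
noncomputable def sandwichPosSemidef {D : ℕ} {ρ0 ρ1 : Matrix (Fin D) (Fin D) ℂ}
    (hρ0 : ρ0.PosSemidef) (hρ1 : ρ1.PosSemidef) :
    (CFC.sqrt ρ1 * ρ0 * CFC.sqrt ρ1).PosSemidef := by
  have h := hρ0.mul_mul_conjTranspose_same (CFC.sqrt ρ1)
  rwa [(CFC.sqrt_nonneg ρ1).posSemidef.isHermitian.eq] at h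

/-- `ψ : ℂ^D ⊗ ℂ^D` is a purification of the density matrix `ρ` if the partial trace of
`|ψ⟩⟨ψ|` over the second factor equals `ρ`. -/
def IsPurification {D : ℕ} (ψ : Fin D × Fin D → ℂ) (ρ : Matrix (Fin D) (Fin D) ℂ) : Prop :=
  ∀ i j, ρ i j = ∑ k, ψ (i, k) * star (ψ (j, k))

/-- Polar decomposition: if `M Mᴴ = ρ` then `M = √ρ · U` for some unitary `U`. -/
lemma matrix_polar {D : ℕ} {M ρ : Matrix (Fin D) (Fin D) ℂ}
    (hρ : ρ.PosSemidef) (hM : M * Mᴴ = ρ) :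
    ∃ U : Matrix (Fin D) (Fin D) ℂ, U * Uᴴ = 1 ∧ Uᴴ * U = 1 ∧ M = CFC.sqrt ρ * U := by
  classical
  set h := hρ.1 with hh
  set V : Matrix (Fin D) (Fin D) ℂ := (h.eigenvectorUnitary : Matrix (Fin D) (Fin D) ℂ) with hV
  have hVV : V * Vᴴ = 1 := by
    simpa [V, star_eq_conjTranspose] using (Matrix.mem_unitaryGroup_iff).mp h.eigenvectorUnitary.2
  have hVV' : Vᴴ * V = 1 := mul_eq_one_comm.mp hVV
  set d : Fin D → ℝ := h.eigenvalues with hd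
  have hd0 : ∀ i, 0 ≤ d i := hρ.eigenvalues_nonneg
  have hspec : ρ = V * diagonal (Complex.ofReal ∘ d) * Vᴴ := h.spectral_theorem
  set g : Fin D → ℂ := fun i => (Real.sqrt (d i) : ℂ) with hg
  set P : Matrix (Fin D) (Fin D) ℂ := V * diagonal g * Vᴴ with hP
  have hgg : diagonal g * diagonal g = diagonal (Complex.ofReal ∘ d) := by
    have e : (fun i => g i * g i) = Complex.ofReal ∘ d := by
      funext i
      simp only [Function.comp, g, ← Complex.ofReal_mul, Real.mul_self_sqrt (hd0 i)]
    rw [diagonal_mul_diagonal, e]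
  have hPP : P ^ 2 = ρ := by
    have e1 : P ^ 2 = V * (diagonal g * (Vᴴ * V) * diagonal g) * Vᴴ := by
      rw [pow_two, hP]; noncomm_ring
    rw [e1, hVV', Matrix.mul_one, hgg]
    exact hspec.symm
  have hPpsd : P.PosSemidef := by
    have : (diagonal g).PosSemidef := by
      refine Matrix.posSemidef_diagonal_iff.mpr fun i => ?_
      simp only [g]
      exact Complex.zero_le_real.mpr (Real.sqrt_nonneg _)
    simpa [hP] using this.mul_mul_conjTranspose_same V
  have hPsqrt : P = CFC.sqrt ρ :=
    (CFC.sqrt_unique (a := ρ) (b := P) (by rw [← pow_two]; exact hPP) hPpsd.nonneg).symm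
  -- the matrix N
  set N : Matrix (Fin D) (Fin D) ℂ := Vᴴ * M with hN
  have hNN : N * Nᴴ = diagonal (Complex.ofReal ∘ d) := by
    have : N * Nᴴ = Vᴴ * ρ * V := by
      rw [hN, conjTranspose_mul, conjTranspose_conjTranspose, ← hM]
      noncomm_ring
    have e2 : Vᴴ * ρ * V = (Vᴴ * V) * diagonal (Complex.ofReal ∘ d) * (Vᴴ * V) := by
      rw [hspec]; noncomm_ring
    rw [this, e2, hVV', Matrix.one_mul, Matrix.mul_one]
  -- rows of N
  have hrow : ∀ i j, ∑ k, N i k * star (N j k) = diagonal (Complex.ofReal ∘ d) i j := by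
    intro i j
    rw [← hNN]
    rfl
  -- the normalized rows of `N`, as vectors in Euclidean space
  set v : Fin D → EuclideanSpace ℂ (Fin D) :=
    fun i => ((Real.sqrt (d i) : ℂ))⁻¹ • ((WithLp.equiv 2 (Fin D → ℂ)).symm (fun k => N i k))
    with hv
  have hinner : ∀ i j, inner (𝕜 := ℂ) ((WithLp.equiv 2 (Fin D → ℂ)).symm (fun k => N i k))
      ((WithLp.equiv 2 (Fin D → ℂ)).symm (fun k => N j k)) = diagonal (Complex.ofReal ∘ d) j i := by
    intro i j
    rw [← hrow j i]
    rw [PiLp.inner_apply]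
    simp only [WithLp.equiv_symm_apply, PiLp.toLp_apply, RCLike.inner_apply]
    apply Finset.sum_congr rfl
    intro k _
    simp [mul_comm, RCLike.star_def]
  have hvon : Orthonormal ℂ (Set.restrict {i | d i ≠ 0} v) := by
    rw [orthonormal_iff_ite]
    rintro ⟨i, hi⟩ ⟨j, hj⟩
    have key : inner ℂ (v i) (v j) = (starRingEnd ℂ) ((Real.sqrt (d i) : ℂ))⁻¹
        * (((Real.sqrt (d j) : ℂ))⁻¹ * diagonal (Complex.ofReal ∘ d) j i) :=
      (inner_smul_left _ _ _).trans (congrArg _ ((inner_smul_right _ _ _).trans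
        (congrArg _ (hinner i j))))
    show inner ℂ (v i) (v j) = _
    rw [key]
    by_cases hij : i = j
    · subst hij
      simp only [Subtype.mk.injEq, if_pos rfl, diagonal_apply_eq]
      have hdi : 0 < d i := lt_of_le_of_ne (hd0 i) (Ne.symm hi)
      have hsqR : Real.sqrt (d i) ≠ 0 := Real.sqrt_ne_zero'.mpr hdi
      simp only [map_inv₀, Complex.conj_ofReal, Function.comp_apply]
      norm_cast
      field_simp
      simp [Real.sq_sqrt (hd0 i)]
    · have : diagonal (Complex.ofReal ∘ d) j i = 0 := diagonal_apply_ne _ (Ne.symm hij)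
      rw [this]
      simp [Subtype.mk.injEq, hij]
  have card : Module.finrank ℂ (EuclideanSpace ℂ (Fin D)) = Fintype.card (Fin D) := by simp
  obtain ⟨b, hb⟩ := hvon.exists_orthonormalBasis_extension_of_card_eq card
  set U' : Matrix (Fin D) (Fin D) ℂ := fun i k => (WithLp.equiv 2 (Fin D → ℂ)) (b i) k with hU'
  have hbon := orthonormal_iff_ite.mp b.orthonormal
  have hU'1 : U' * U'ᴴ = 1 := by
    ext i j
    rw [Matrix.mul_apply, Matrix.one_apply]
    have := hbon j i
    rw [PiLp.inner_apply] at this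
    simp only [RCLike.inner_apply] at this
    calc ∑ k, U' i k * U'ᴴ k j
        = ∑ k, (WithLp.equiv 2 (Fin D → ℂ)) (b i) k
            * (starRingEnd ℂ) ((WithLp.equiv 2 (Fin D → ℂ)) (b j) k) := by
          apply Finset.sum_congr rfl
          intro k _
          rfl
      _ = if j = i then 1 else 0 := this
      _ = if i = j then 1 else 0 := by simp [eq_comm]
  have hU'2 : U'ᴴ * U' = 1 := mul_eq_one_comm.mp hU'1
  have hNdiag : N = diagonal g * U' := by
    ext i k
    rw [Matrix.diagonal_mul]
    by_cases hdi : d i = 0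
    · have hNik : N i k = 0 := by
        have h0 := hrow i i
        rw [diagonal_apply_eq] at h0
        simp only [Function.comp, hdi, Complex.ofReal_zero] at h0
        have h1 : ∀ l, N i l * star (N i l) = (Complex.normSq (N i l) : ℂ) := by
          intro l; rw [RCLike.star_def, Complex.mul_conj]
        rw [Finset.sum_congr rfl (fun l _ => h1 l)] at h0
        rw [← Complex.ofReal_sum] at h0
        have h2 : ∑ l, Complex.normSq (N i l) = 0 := by exact_mod_cast h0
        have h3 := (Finset.sum_eq_zero_iff_of_nonneg
          (fun l _ => Complex.normSq_nonneg (N i l))).mp h2 k (Finset.mem_univ k)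
        exact Complex.normSq_eq_zero.mp h3
      rw [hNik]
      simp [hg, hdi]
    · have hbi : b i = v i := hb i hdi
      have hsq : (Real.sqrt (d i) : ℂ) ≠ 0 := by
        simp only [ne_eq, Complex.ofReal_eq_zero]
        exact Real.sqrt_ne_zero'.mpr (lt_of_le_of_ne (hd0 i) (Ne.symm hdi))
      have : U' i k = ((Real.sqrt (d i) : ℂ))⁻¹ * N i k := by
        show (WithLp.equiv 2 (Fin D → ℂ)) (b i) k = _
        rw [hbi, hv]
        rfl
      rw [this, hg]
      field_simp
  refine ⟨V * U', ?_, ?_, ?_⟩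
  · calc V * U' * (V * U')ᴴ = V * (U' * U'ᴴ) * Vᴴ := by
          rw [Matrix.conjTranspose_mul]; noncomm_ring
      _ = 1 := by rw [hU'1, Matrix.mul_one, hVV]
  · calc (V * U')ᴴ * (V * U') = U'ᴴ * (Vᴴ * V) * U' := by
          rw [Matrix.conjTranspose_mul]; noncomm_ring
      _ = 1 := by rw [hVV', Matrix.mul_one, hU'2]
  · have hMVN : M = V * N := by
      rw [hN, ← Matrix.mul_assoc, hVV, Matrix.one_mul]
    rw [hMVN, hNdiag, ← hPsqrt, hP]
    calc V * (diagonal g * U') = V * diagonal g * (Vᴴ * V) * U' := by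
          rw [hVV', Matrix.mul_one]; noncomm_ring
      _ = V * diagonal g * Vᴴ * (V * U') := by noncomm_ring

lemma trace_conjTranspose_mul {D : ℕ} (X : Matrix (Fin D) (Fin D) ℂ) :
    (Xᴴ * X).trace = ((∑ p : Fin D × Fin D, Complex.normSq (X p.1 p.2) : ℝ) : ℂ) := by
  rw [Matrix.trace, Complex.ofReal_sum, Fintype.sum_prod_type]
  simp only [Matrix.diag_apply, Matrix.mul_apply, Matrix.conjTranspose_apply]
  rw [Finset.sum_comm]
  refine Finset.sum_congr rfl fun i _ => Finset.sum_congr rfl fun j _ => ?_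
  rw [RCLike.star_def, Complex.normSq_eq_conj_mul_self]

lemma trace_conjTranspose_mul_re {D : ℕ} (X : Matrix (Fin D) (Fin D) ℂ) :
    (Xᴴ * X).trace.re = ∑ p : Fin D × Fin D, Complex.normSq (X p.1 p.2) := by
  rw [trace_conjTranspose_mul, Complex.ofReal_re]

lemma psd_trace_abs_eq_re {D : ℕ} {S : Matrix (Fin D) (Fin D) ℂ} (hS : S.PosSemidef) :
    ‖S.trace‖ = S.trace.re := by
  have hC : CFC.sqrt S * CFC.sqrt S = S := CFC.sqrt_mul_sqrt_self S hS.nonneg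
  have hCh : (CFC.sqrt S)ᴴ = CFC.sqrt S := (CFC.sqrt_nonneg S).posSemidef.isHermitian.eq
  have h : S.trace = ((∑ p : Fin D × Fin D, Complex.normSq (CFC.sqrt S p.1 p.2) : ℝ) : ℂ) := by
    calc S.trace = ((CFC.sqrt S)ᴴ * CFC.sqrt S).trace := by rw [hCh, hC]
      _ = _ := trace_conjTranspose_mul _
  rw [h, Complex.norm_real, Real.norm_eq_abs, Complex.ofReal_re]
  exact abs_of_nonneg (Finset.sum_nonneg fun p _ => Complex.normSq_nonneg _)

lemma trace_psd_mul_unitary_le {D : ℕ} {S R : Matrix (Fin D) (Fin D) ℂ}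
    (hS : S.PosSemidef) (hR : R * Rᴴ = 1) :
    ‖(S * R).trace‖ ≤ S.trace.re := by
  set C := CFC.sqrt S with hCdef
  have hC : C * C = S := CFC.sqrt_mul_sqrt_self S hS.nonneg
  have hCh : Cᴴ = C := (CFC.sqrt_nonneg S).posSemidef.isHermitian.eq
  have hc : ∀ a b, (starRingEnd ℂ) (C a b) = C b a := by
    intro a b
    have h1 := congrFun (congrFun hCh b) a
    rw [Matrix.conjTranspose_apply, RCLike.star_def] at h1
    exact h1
  set x : EuclideanSpace ℂ (Fin D × Fin D) :=
    (WithLp.equiv 2 (Fin D × Fin D → ℂ)).symm (fun p => C p.1 p.2) with hx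
  set y : EuclideanSpace ℂ (Fin D × Fin D) :=
    (WithLp.equiv 2 (Fin D × Fin D → ℂ)).symm (fun p => (C * R) p.1 p.2) with hy
  have hxapp : ∀ p, x p = C p.1 p.2 := fun p => rfl
  have hyapp : ∀ p, y p = (C * R) p.1 p.2 := fun p => rfl
  have hxnorm : ‖x‖ ^ 2 = S.trace.re := by
    rw [EuclideanSpace.norm_eq, Real.sq_sqrt (by positivity)]
    have e : ∀ p : Fin D × Fin D, ‖x p‖ ^ 2 = Complex.normSq (C p.1 p.2) := by
      intro p
      rw [hxapp p, Complex.sq_norm]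
    rw [Finset.sum_congr rfl (fun p _ => e p), ← trace_conjTranspose_mul_re, hCh, hC]
  have hynorm : ‖y‖ ^ 2 = S.trace.re := by
    rw [EuclideanSpace.norm_eq, Real.sq_sqrt (by positivity)]
    have e : ∀ p : Fin D × Fin D, ‖y p‖ ^ 2 = Complex.normSq ((C * R) p.1 p.2) := by
      intro p
      rw [hyapp p, Complex.sq_norm]
    rw [Finset.sum_congr rfl (fun p _ => e p), ← trace_conjTranspose_mul_re]
    have e2 : (C * R)ᴴ * (C * R) = Rᴴ * (S * R) := by
      rw [Matrix.conjTranspose_mul, hCh, ← hC]; noncomm_ring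
    rw [e2, Matrix.trace_mul_comm, Matrix.mul_assoc, hR, Matrix.mul_one]
  have hinner : inner (𝕜 := ℂ) x y = (S * R).trace := by
    rw [← hC, Matrix.mul_assoc, Matrix.trace, PiLp.inner_apply]
    simp only [RCLike.inner_apply, Matrix.diag_apply]
    rw [Fintype.sum_prod_type, Finset.sum_comm]
    refine Finset.sum_congr rfl fun i _ => ?_
    rw [Matrix.mul_apply]
    refine Finset.sum_congr rfl fun j _ => ?_
    rw [hxapp (j, i), hyapp (j, i), hc]; exact mul_comm _ _
  have ht : 0 ≤ S.trace.re := by rw [← hxnorm]; positivity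
  have h1 : ‖x‖ = Real.sqrt S.trace.re := by rw [← hxnorm, Real.sqrt_sq (norm_nonneg x)]
  have h2 : ‖y‖ = Real.sqrt S.trace.re := by rw [← hynorm, Real.sqrt_sq (norm_nonneg y)]
  calc ‖(S * R).trace‖ = ‖inner (𝕜 := ℂ) x y‖ := by
        rw [hinner]
    _ ≤ ‖x‖ * ‖y‖ := norm_inner_le_norm x y
    _ = S.trace.re := by rw [h1, h2, Real.mul_self_sqrt ht]

/-- Uhlmann's theorem: the inner products of purifications of `ρ0` and `ρ1` are bounded
in modulus by the fidelity `tr √(ρ1^{1/2} ρ0 ρ1^{1/2})`, and the bound is achieved by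
suitable purifications. -/
theorem uhlmann {D : ℕ} (ρ0 ρ1 : Matrix (Fin D) (Fin D) ℂ)
    (hρ0 : ρ0.PosSemidef) (hρ1 : ρ1.PosSemidef)
    (hρ0t : ρ0.trace = 1) (hρ1t : ρ1.trace = 1) :
    (∀ ψ0 ψ1 : Fin D × Fin D → ℂ, IsPurification ψ0 ρ0 → IsPurification ψ1 ρ1 →
        ‖∑ p, star (ψ0 p) * ψ1 p‖
          ≤ (CFC.sqrt (CFC.sqrt ρ1 * ρ0 * CFC.sqrt ρ1)).trace.re) ∧
    (∃ ψ0 ψ1 : Fin D × Fin D → ℂ, IsPurification ψ0 ρ0 ∧ IsPurification ψ1 ρ1 ∧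
        ‖∑ p, star (ψ0 p) * ψ1 p‖
          = (CFC.sqrt (CFC.sqrt ρ1 * ρ0 * CFC.sqrt ρ1)).trace.re) := by
  classical
  have hP0h : (CFC.sqrt ρ0)ᴴ = CFC.sqrt ρ0 := (CFC.sqrt_nonneg ρ0).posSemidef.isHermitian.eq
  have hP1h : (CFC.sqrt ρ1)ᴴ = CFC.sqrt ρ1 := (CFC.sqrt_nonneg ρ1).posSemidef.isHermitian.eq
  have hP0m : CFC.sqrt ρ0 * CFC.sqrt ρ0 = ρ0 := CFC.sqrt_mul_sqrt_self ρ0 hρ0.nonneg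
  have hP1m : CFC.sqrt ρ1 * CFC.sqrt ρ1 = ρ1 := CFC.sqrt_mul_sqrt_self ρ1 hρ1.nonneg
  set P0 := CFC.sqrt ρ0 with hP0def
  set P1 := CFC.sqrt ρ1 with hP1def
  set S := CFC.sqrt (P1 * ρ0 * P1) with hSdef
  have hSpsd : S.PosSemidef := (CFC.sqrt_nonneg _).posSemidef
  have hSh : Sᴴ = S := hSpsd.isHermitian.eq
  set A := P0 * P1 with hA
  have hAT : Aᴴ * Aᴴᴴ = P1 * ρ0 * P1 := by
    rw [conjTranspose_conjTranspose, hA, conjTranspose_mul, hP0h, hP1h, ← hP0m]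
    noncomm_ring
  obtain ⟨W, hW1, hW2, hAW⟩ := matrix_polar (sandwichPosSemidef hρ0 hρ1) hAT
  have hAeq : A = Wᴴ * S := by
    calc A = Aᴴᴴ := (conjTranspose_conjTranspose A).symm
      _ = (S * W)ᴴ := by rw [hAW]
      _ = Wᴴ * S := by rw [conjTranspose_mul, hSh]
  -- the inner product of purifications as a trace
  have hsum : ∀ f g : Fin D × Fin D → ℂ,
      (∑ p, star (f p) * g p)
        = ((Matrix.of fun i k => f (i, k))ᴴ * (Matrix.of fun i k => g (i, k))).trace := by
    intro f g
    rw [Fintype.sum_prod_type, Matrix.trace]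
    simp only [Matrix.diag_apply, Matrix.mul_apply, Matrix.conjTranspose_apply,
      Matrix.of_apply]
    exact Finset.sum_comm
  -- purifications give Gram factorizations
  have hpur : ∀ (ψ : Fin D × Fin D → ℂ) (ρ : Matrix (Fin D) (Fin D) ℂ), IsPurification ψ ρ →
      (Matrix.of fun i k => ψ (i, k)) * (Matrix.of fun i k => ψ (i, k))ᴴ = ρ := by
    intro ψ ρ hψ
    ext i j
    rw [Matrix.mul_apply]
    simp only [Matrix.conjTranspose_apply, Matrix.of_apply]
    exact (hψ i j).symm
  constructor
  · -- the bound
    intro ψ0 ψ1 h0 h1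
    obtain ⟨U0, hU0a, hU0b, hM0⟩ := matrix_polar hρ0 (hpur ψ0 ρ0 h0)
    obtain ⟨U1, hU1a, hU1b, hM1⟩ := matrix_polar hρ1 (hpur ψ1 ρ1 h1)
    rw [hsum ψ0 ψ1]
    have e : ((Matrix.of fun i k => ψ0 (i, k))ᴴ * (Matrix.of fun i k => ψ1 (i, k))).trace
        = (S * (U1 * U0ᴴ * Wᴴ)).trace := by
      rw [hM0, hM1, conjTranspose_mul, hP0h]
      have e1 : U0ᴴ * P0 * (P1 * U1) = U0ᴴ * (A * U1) := by rw [hA]; noncomm_ring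
      rw [e1, Matrix.trace_mul_comm]
      have e2 : A * U1 * U0ᴴ = Wᴴ * (S * (U1 * U0ᴴ)) := by rw [hAeq]; noncomm_ring
      rw [e2, Matrix.trace_mul_comm, Matrix.mul_assoc]
    rw [e]
    have hRu : (U1 * U0ᴴ * Wᴴ) * (U1 * U0ᴴ * Wᴴ)ᴴ = 1 := by
      have e3 : (U1 * U0ᴴ * Wᴴ)ᴴ = W * (U0 * U1ᴴ) := by
        simp only [conjTranspose_mul, conjTranspose_conjTranspose, Matrix.mul_assoc]
      rw [e3]
      calc U1 * U0ᴴ * Wᴴ * (W * (U0 * U1ᴴ))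
          = U1 * (U0ᴴ * ((Wᴴ * W) * U0)) * U1ᴴ := by noncomm_ring
        _ = 1 := by
            rw [hW2, Matrix.one_mul, hU0b, Matrix.mul_one, hU1a]
    exact trace_psd_mul_unitary_le hSpsd hRu
  · -- achieving equality
    refine ⟨fun p => P0 p.1 p.2, fun p => (P1 * W) p.1 p.2, ?_, ?_, ?_⟩
    · intro i j
      have e : (P0 * P0ᴴ) i j = ∑ k, P0 i k * star (P0 j k) := by
        rw [Matrix.mul_apply]
        simp only [Matrix.conjTranspose_apply]
      rw [← e, hP0h, hP0m]
    · intro i j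
      have hM1g : (P1 * W) * (P1 * W)ᴴ = ρ1 := by
        rw [conjTranspose_mul, hP1h]
        calc P1 * W * (Wᴴ * P1) = P1 * (W * Wᴴ) * P1 := by noncomm_ring
          _ = ρ1 := by rw [hW1, Matrix.mul_one, hP1m]
      have e : ((P1 * W) * (P1 * W)ᴴ) i j = ∑ k, (P1 * W) i k * star ((P1 * W) j k) := by
        rw [Matrix.mul_apply]
        simp only [Matrix.conjTranspose_apply]
      rw [← e, hM1g]
    · rw [hsum]
      have em0 : (Matrix.of fun i k => P0 (i, k).1 (i, k).2) = P0 := rfl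
      have em1 : (Matrix.of fun i k => (P1 * W) (i, k).1 (i, k).2) = P1 * W := rfl
      rw [em0, em1]
      have e : P0ᴴ * (P1 * W) = Wᴴ * S * W := by
        rw [hP0h, ← Matrix.mul_assoc, ← hA, hAeq]
      rw [e, Matrix.trace_mul_comm]
      have e2 : W * (Wᴴ * S) = S := by rw [← Matrix.mul_assoc, hW1, Matrix.one_mul]
      rw [e2]
      exact psd_trace_abs_eq_re hSpsd
end
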